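/- Let (X^ε, Ω, P^ε) be a clustering process with carrying capacity (L,K) on a finite connected graph with n ≥ 1 particles, and let π^ε be stationary distributions for P^ε whose entries have integer orders of magnitude φ(π(x)). Define μ(x) = Σ_{l=1}^m [min(x_l, L) + max(x_l − K + 1, 0)] and c = min_{x∈Ω} μ(x). Then μ satisfies the order-of-magnitude detailed balance condition (so the family is OM-reversible), and φ(π(x)) = μ(x) − c for every x ∈ Ω. -/

import Mathlib

open Finset

/-- `f` is `Θ(ε^k)` as `ε → 0⁺`: there are positive constants `M₁, M₂, ε̄` with
`M₁ ε^k ≤ f ε ≤ M₂ ε^k` for all `0 < ε < ε̄`. -/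
def IsTheta (f : ℝ → ℝ) (k : ℤ) : Prop :=
  ∃ M₁ M₂ εbar : ℝ, 0 < M₁ ∧ 0 < M₂ ∧ 0 < εbar ∧
    ∀ ε : ℝ, 0 < ε → ε < εbar → M₁ * ε ^ k ≤ f ε ∧ f ε ≤ M₂ * ε ^ k

/-- `P(u,v) > 0` in the order-of-magnitude sense: `ε ↦ P^ε(u,v)` is `Θ(ε^k)`
for some integer `k`. -/
def EPos {Ω : Type*} (P : ℝ → Ω → Ω → ℝ) (u v : Ω) : Prop :=
  ∃ k : ℤ, IsTheta (fun ε => P ε u v) k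

/-- Configurations of `n` particles on the vertex set `V`. -/
abbrev Config (V : Type) [Fintype V] (n : ℕ) := {x : V → ℕ // ∑ v, x v = n}

noncomputable instance Config.fintype {V : Type} [Fintype V] [DecidableEq V] {n : ℕ} :
    Fintype (Config V n) :=
  Fintype.ofInjective
    (fun x : Config V n => fun v : V =>
      (⟨x.val v, Nat.lt_succ_of_le ((Finset.single_le_sum
        (f := x.val) (fun i _ => Nat.zero_le _) (Finset.mem_univ v)).trans
        (le_of_eq x.2))⟩ : Fin (n + 1)))
    (fun a b h => Subtype.ext (funext fun v => congrArg Fin.val (congrFun h v)))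

/-- The configuration `x^{i,j}` obtained from `x` by moving one particle from vertex `i`
to vertex `j` (with `x^{i,i} = x`). -/
def move {V : Type} [DecidableEq V] (x : V → ℕ) (i j : V) : V → ℕ :=
  if i = j then x else Function.update (Function.update x i (x i - 1)) j (x j + 1)

/-- The support of a configuration: the set of occupied vertices. -/
def supp {V : Type} [Fintype V] [DecidableEq V] (x : V → ℕ) : Finset V :=
  Finset.univ.filter fun v => x v ≠ 0

/-- `μ(x) = Σ_l [min(x_l, L) + max(x_l − K + 1, 0)]`. -/
def muCC {V : Type} [Fintype V] {n : ℕ} (L K : ℕ) (x : Config V n) : ℤ :=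
  ∑ v, (min (x.val v : ℤ) (L : ℤ) + max ((x.val v : ℤ) - (K : ℤ) + 1) 0)

/-!
Let `w(t) = min(t, L) + max(t - K + 1, 0)`, so that `μ(x) = ∑ w(x_v)`. Since `L < K`, the
increment `w(t) - w(t - 1)` is `1` if `t ≤ L` or `t ≥ K` and `0` otherwise: exactly the order
of a jump that brings the target site to occupancy `t`. Moving a particle from `v_i` to `v_j`
and back therefore changes `μ` by the difference of the two jump orders, which is
order-of-magnitude detailed balance.

For the stationary orders, let `A` be the set where `φ(π) - μ` is minimal. Stationarity
balances the probability flow out of `A` against the flow into `A`. By detailed balance every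
edge entering `A` carries flow of strictly larger order than the cheapest edge leaving it, so no
edge leaves `A`; since single-particle moves along edges of the connected graph link any two
configurations, `A = Ω`. Finally `∑ π = 1` makes the minimum of `φ(π)` equal to `0`, which
pins the constant to `-c`.
-/

open Filter Topology

lemma eventually_nhdsGT_zero_iff {p : ℝ → Prop} :
    (∀ᶠ ε in 𝓝[>] 0, p ε) ↔ ∃ εbar > 0, ∀ ε : ℝ, 0 < ε → ε < εbar → p ε := by
  simp only [Filter.Eventually, mem_nhdsGT_iff_exists_Ioo_subset, Set.subset_def,
    Set.mem_Ioo, Set.mem_Ioi, Set.mem_ofPred_eq, and_imp]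

lemma isTheta_iff {f : ℝ → ℝ} {k : ℤ} :
    IsTheta f k ↔ ∃ M₁ M₂ : ℝ, 0 < M₁ ∧ 0 < M₂ ∧
      ∀ᶠ ε in 𝓝[>] 0, M₁ * ε ^ k ≤ f ε ∧ f ε ≤ M₂ * ε ^ k := by
  simp only [IsTheta, eventually_nhdsGT_zero_iff]
  constructor
  · rintro ⟨M₁, M₂, εbar, h₁, h₂, hεbar, h⟩
    exact ⟨M₁, M₂, h₁, h₂, εbar, hεbar, h⟩
  · rintro ⟨M₁, M₂, h₁, h₂, εbar, hεbar, h⟩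
    exact ⟨M₁, M₂, εbar, h₁, h₂, hεbar, h⟩

lemma le_of_eventually_mul_zpow_le {a b : ℝ} {k l : ℤ} (ha : 0 < a)
    (h : ∀ᶠ ε in 𝓝[>] 0, a * ε ^ k ≤ b * ε ^ l) : l ≤ k := by
  by_contra! hkl
  have hlim : Tendsto (fun ε : ℝ => b * ε ^ (l - k).toNat) (𝓝[>] 0) (𝓝 0) := by
    have hcont : Continuous fun ε : ℝ => b * ε ^ (l - k).toNat := by fun_prop
    have := (hcont.tendsto 0).mono_left (nhdsWithin_le_nhds (s := Set.Ioi 0))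
    simpa [Int.toNat_eq_zero, hkl] using this
  obtain ⟨ε, hle, hsmall, hε⟩ :=
    (h.and ((hlim.eventually (gt_mem_nhds ha)).and self_mem_nhdsWithin)).exists
  have hsplit : ε ^ l = ε ^ (l - k).toNat * ε ^ k := by
    rw [← zpow_natCast, ← zpow_add₀ hε.ne', Int.toNat_of_nonneg (by omega), sub_add_cancel]
  have : a * ε ^ k < a * ε ^ k := calc
    a * ε ^ k ≤ b * ε ^ (l - k).toNat * ε ^ k := by rw [mul_assoc, ← hsplit]; exact hle
    _ < a * ε ^ k := by gcongr
  exact this.false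

namespace IsTheta

variable {f g : ℝ → ℝ} {k l : ℤ}

lemma le_of_eventually_le (hf : IsTheta f k) (hg : IsTheta g l)
    (hfg : ∀ᶠ ε in 𝓝[>] 0, f ε ≤ g ε) : l ≤ k := by
  obtain ⟨M₁, _, hM₁, -, hfε⟩ := isTheta_iff.1 hf
  obtain ⟨_, N₂, -, -, hgε⟩ := isTheta_iff.1 hg
  refine le_of_eventually_mul_zpow_le (b := N₂) hM₁ ?_
  filter_upwards [hfε, hgε, hfg] with ε hfε hgε hfgε
  exact hfε.1.trans (hfgε.trans hgε.2)

lemma unique (hk : IsTheta f k) (hl : IsTheta f l) : k = l :=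
  le_antisymm (hl.le_of_eventually_le hk (Eventually.of_forall fun _ => le_rfl))
    (hk.le_of_eventually_le hl (Eventually.of_forall fun _ => le_rfl))

lemma mul (hf : IsTheta f k) (hg : IsTheta g l) : IsTheta (fun ε => f ε * g ε) (k + l) := by
  obtain ⟨M₁, M₂, hM₁, hM₂, hfε⟩ := isTheta_iff.1 hf
  obtain ⟨N₁, N₂, hN₁, hN₂, hgε⟩ := isTheta_iff.1 hg
  refine isTheta_iff.2 ⟨M₁ * N₁, M₂ * N₂, by positivity, by positivity, ?_⟩
  filter_upwards [hfε, hgε, self_mem_nhdsWithin] with ε ⟨hf₁, hf₂⟩ ⟨hg₁, hg₂⟩ (hε : 0 < ε)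
  have hεk := zpow_pos hε k
  have hεl := zpow_pos hε l
  rw [zpow_add₀ hε.ne']
  constructor
  · calc M₁ * N₁ * (ε ^ k * ε ^ l) = (M₁ * ε ^ k) * (N₁ * ε ^ l) := by ring
      _ ≤ f ε * g ε := mul_le_mul hf₁ hg₁ (by positivity) (by linarith [mul_pos hM₁ hεk])
  · calc f ε * g ε ≤ (M₂ * ε ^ k) * (N₂ * ε ^ l) :=
          mul_le_mul hf₂ hg₂ (by linarith [mul_pos hN₁ hεl]) (by positivity)
      _ = M₂ * N₂ * (ε ^ k * ε ^ l) := by ring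

lemma eventually_le_mul_zpow {m : ℤ} (hf : IsTheta f k) (hmk : m ≤ k) :
    ∃ C, ∀ᶠ ε in 𝓝[>] 0, f ε ≤ C * ε ^ m := by
  obtain ⟨_, M₂, -, hM₂, hfε⟩ := isTheta_iff.1 hf
  refine ⟨M₂, ?_⟩
  filter_upwards [hfε, Ioo_mem_nhdsGT zero_lt_one] with ε hfε ⟨hε₀, hε₁⟩
  exact hfε.2.trans
    (mul_le_mul_of_nonneg_left (zpow_le_zpow_right_of_le_one₀ hε₀ hε₁.le hmk) hM₂.le)

end IsTheta

lemma eventually_sum_le_mul_zpow {ι : Type*} (s : Finset ι) {f : ι → ℝ → ℝ} {m : ℤ}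
    (h : ∀ i ∈ s, ∃ C, ∀ᶠ ε in 𝓝[>] 0, f i ε ≤ C * ε ^ m) :
    ∃ C, ∀ᶠ ε in 𝓝[>] 0, ∑ i ∈ s, f i ε ≤ C * ε ^ m := by
  choose! C hC using h
  refine ⟨∑ i ∈ s, C i, ?_⟩
  filter_upwards [s.eventually_all.2 hC] with ε hε
  rw [Finset.sum_mul]
  exact Finset.sum_le_sum hε

lemma Relation.ReflTransGen.exists_boundary_rel {α : Type*} {r : α → α → Prop} {s : Set α}
    {a b : α} (h : Relation.ReflTransGen r a b) (ha : a ∈ s) (hb : b ∉ s) :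
    ∃ x ∈ s, ∃ y ∉ s, r x y := by
  induction h with
  | refl => exact absurd ha hb
  | @tail c d _ hcd ih =>
    by_cases hc : c ∈ s
    · exact ⟨c, hc, d, hb, hcd⟩
    · exact ih hc

section StationaryOrders

variable {Ω : Type*} [Fintype Ω]

lemma sum_flow_out_eq_sum_flow_in [DecidableEq Ω] {P : Ω → Ω → ℝ} {π : Ω → ℝ}
    (hrow : ∀ x, ∑ y, P x y = 1) (hstat : ∀ y, ∑ x, π x * P x y = π y) (A : Finset Ω) :
    ∑ p ∈ A ×ˢ Aᶜ, π p.1 * P p.1 p.2 = ∑ p ∈ Aᶜ ×ˢ A, π p.1 * P p.1 p.2 := by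
  rw [Finset.sum_product, Finset.sum_product]
  have hout : ∑ x ∈ A, ∑ y ∈ A, π x * P x y + ∑ x ∈ A, ∑ y ∈ Aᶜ, π x * P x y
      = ∑ x ∈ A, π x := by
    rw [← Finset.sum_add_distrib]
    refine Finset.sum_congr rfl fun x _ => ?_
    rw [Finset.sum_add_sum_compl, ← Finset.mul_sum, hrow, mul_one]
  have hin : ∑ x ∈ A, ∑ y ∈ A, π x * P x y + ∑ x ∈ Aᶜ, ∑ y ∈ A, π x * P x y
      = ∑ y ∈ A, π y := by
    rw [Finset.sum_comm (s := A) (t := A), Finset.sum_comm (s := Aᶜ), ← Finset.sum_add_distrib]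
    refine Finset.sum_congr rfl fun y _ => ?_
    rw [Finset.sum_add_sum_compl, hstat]
  linarith

variable {P : ℝ → Ω → Ω → ℝ} {π : ℝ → Ω → ℝ} {φP : Ω → Ω → ℤ} {φπ : Ω → ℤ}

/-- The flow out of `A` equals the flow into `A`, so the leading out-flow term must be
matched by an in-flow term of no larger order. -/
lemma exists_order_flow_in_le
    (hstoch : ∀ ε : ℝ, 0 < ε → (∀ x y, 0 ≤ P ε x y) ∧ ∀ x, ∑ y, P ε x y = 1)
    (hzero : ∀ x y, ¬ EPos P x y → ∃ εbar > (0 : ℝ), ∀ ε : ℝ, 0 < ε → ε < εbar → P ε x y = 0)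
    (hφP : ∀ x y, EPos P x y → IsTheta (fun ε => P ε x y) (φP x y))
    (hstat : ∀ ε : ℝ, 0 < ε → (∀ z, 0 ≤ π ε z) ∧ ∀ y, ∑ x, π ε x * P ε x y = π ε y)
    (hφπ : ∀ z, IsTheta (fun ε => π ε z) (φπ z))
    {A : Finset Ω} {a b : Ω} (ha : a ∈ A) (hb : b ∉ A) (hab : EPos P a b) :
    ∃ x ∉ A, ∃ y ∈ A, EPos P x y ∧ φπ x + φP x y ≤ φπ a + φP a b := by
  classical
  by_contra! hin
  obtain ⟨M, _, hM, -, hlow⟩ := isTheta_iff.1 ((hφπ a).mul (hφP a b hab))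
  obtain ⟨C, hup⟩ := eventually_sum_le_mul_zpow (Aᶜ ×ˢ A)
    (f := fun q ε => π ε q.1 * P ε q.1 q.2) (m := φπ a + φP a b + 1) fun q hq => by
      obtain ⟨hx, hy⟩ := Finset.mem_product.1 hq
      by_cases hE : EPos P q.1 q.2
      · exact ((hφπ q.1).mul (hφP _ _ hE)).eventually_le_mul_zpow
          (hin _ (Finset.mem_compl.1 hx) _ hy hE)
      · obtain ⟨εbar, hεbar, hP⟩ := hzero _ _ hE
        exact ⟨0, eventually_nhdsGT_zero_iff.2 ⟨εbar, hεbar, fun ε hε hεbar' => by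
          simp [hP ε hε hεbar']⟩⟩
  refine (lt_add_one (φπ a + φP a b)).not_ge (le_of_eventually_mul_zpow_le (b := C) hM ?_)
  filter_upwards [hlow, hup, self_mem_nhdsWithin] with ε hlowε hupε (hε : 0 < ε)
  obtain ⟨hπ, hstatε⟩ := hstat ε hε
  calc M * ε ^ (φπ a + φP a b) ≤ π ε a * P ε a b := hlowε.1
    _ ≤ ∑ p ∈ A ×ˢ Aᶜ, π ε p.1 * P ε p.1 p.2 :=
      Finset.single_le_sum (f := fun p => π ε p.1 * P ε p.1 p.2)
        (fun p _ => mul_nonneg (hπ p.1) ((hstoch ε hε).1 p.1 p.2))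
        (a := (a, b)) (Finset.mem_product.2 ⟨ha, Finset.mem_compl.2 hb⟩)
    _ = ∑ p ∈ Aᶜ ×ˢ A, π ε p.1 * P ε p.1 p.2 :=
      sum_flow_out_eq_sum_flow_in (hstoch ε hε).2 hstatε A
    _ ≤ C * ε ^ (φπ a + φP a b + 1) := hupε

theorem exists_order_stationary_eq_add_const
    (hstoch : ∀ ε : ℝ, 0 < ε → (∀ x y, 0 ≤ P ε x y) ∧ ∀ x, ∑ y, P ε x y = 1)
    (hzero : ∀ x y, ¬ EPos P x y → ∃ εbar > (0 : ℝ), ∀ ε : ℝ, 0 < ε → ε < εbar → P ε x y = 0)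
    (hsym : ∀ x y, EPos P x y → EPos P y x)
    (hφP : ∀ x y, EPos P x y → IsTheta (fun ε => P ε x y) (φP x y))
    (hstat : ∀ ε : ℝ, 0 < ε → (∀ z, 0 ≤ π ε z) ∧ ∀ y, ∑ x, π ε x * P ε x y = π ε y)
    (hφπ : ∀ z, IsTheta (fun ε => π ε z) (φπ z))
    {μ : Ω → ℤ} (hμ : ∀ x y, EPos P x y → μ x + φP x y = μ y + φP y x)
    (hconn : ∀ x y, Relation.ReflTransGen (EPos P) x y) :
    ∃ d, ∀ z, φπ z = μ z + d := by
  classical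
  by_contra! hne
  obtain ⟨z₀, -⟩ := hne 0
  obtain ⟨zmin, -, hzmin⟩ :=
    Finset.univ.exists_min_image (fun z => φπ z - μ z) ⟨z₀, Finset.mem_univ z₀⟩
  set A := Finset.univ.filter fun z => φπ z - μ z = φπ zmin - μ zmin
  obtain ⟨y₀, hy₀⟩ := hne (φπ zmin - μ zmin)
  obtain ⟨a, ha, b, hb, hab⟩ := (hconn zmin y₀).exists_boundary_rel (s := ↑A)
    (by simp [A]) (by simp [A]; omega)
  set cross := (A ×ˢ Aᶜ).filter fun p => EPos P p.1 p.2
  obtain ⟨p, hp, hpmin⟩ := cross.exists_min_image (fun p => μ p.1 + φP p.1 p.2)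
    ⟨(a, b), by simp_all [cross]⟩
  obtain ⟨⟨hp₁, hp₂⟩, hpE⟩ : (p.1 ∈ A ∧ p.2 ∉ A) ∧ EPos P p.1 p.2 := by simpa [cross] using hp
  obtain ⟨x, hx, y, hy, hxy, hle⟩ :=
    exists_order_flow_in_le hstoch hzero hφP hstat hφπ hp₁ hp₂ hpE
  have hcheap := hpmin (y, x) (by simp_all [cross])
  have hxmin := hzmin x (Finset.mem_univ x)
  have hxA : φπ x - μ x ≠ φπ zmin - μ zmin := by simpa [A] using hx
  have hp₁A : φπ p.1 - μ p.1 = φπ zmin - μ zmin := by simpa [A] using hp₁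
  have hbal := hμ x y hxy
  dsimp only at hcheap
  omega

lemma isLeast_range_order_of_sum_eq_one
    (hπ : ∀ ε : ℝ, 0 < ε → (∀ z, 0 ≤ π ε z) ∧ ∑ z, π ε z = 1)
    (hφπ : ∀ z, IsTheta (fun ε => π ε z) (φπ z)) : IsLeast (Set.range φπ) 0 := by
  have hπε : ∀ᶠ ε in 𝓝[>] (0 : ℝ), (∀ z, 0 ≤ π ε z) ∧ ∑ z, π ε z = 1 :=
    eventually_nhdsWithin_of_forall hπ
  have hnonneg : ∀ z, 0 ≤ φπ z := fun z => by
    obtain ⟨M, _, hM, -, hz⟩ := isTheta_iff.1 (hφπ z)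
    refine le_of_eventually_mul_zpow_le (b := 1) hM ?_
    filter_upwards [hz, hπε] with ε hzε ⟨hnn, hone⟩
    calc M * ε ^ φπ z ≤ π ε z := hzε.1
      _ ≤ ∑ z, π ε z := Finset.single_le_sum (fun z _ => hnn z) (Finset.mem_univ z)
      _ = 1 * ε ^ (0 : ℤ) := by simp [hone]
  refine ⟨?_, by rintro _ ⟨z, rfl⟩; exact hnonneg z⟩
  by_contra hnot
  have hpos : ∀ z, 1 ≤ φπ z := fun z =>
    lt_of_le_of_ne (hnonneg z) fun h => hnot ⟨z, h.symm⟩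
  obtain ⟨C, hC⟩ := eventually_sum_le_mul_zpow Finset.univ
    fun z _ => (hφπ z).eventually_le_mul_zpow (hpos z)
  have : (1 : ℤ) ≤ 0 := le_of_eventually_mul_zpow_le (a := 1) one_pos <| by
    filter_upwards [hC, hπε] with ε hCε ⟨_, hone⟩
    simpa [hone] using hCε
  omega

end StationaryOrders

section Move

variable {V : Type} [DecidableEq V] {i j : V}

lemma move_apply_left (x : V → ℕ) (hij : i ≠ j) : move x i j i = x i - 1 := by
  simp [move, hij]

lemma move_apply_right (x : V → ℕ) (hij : i ≠ j) : move x i j j = x j + 1 := by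
  simp [move, hij]

lemma move_apply_of_ne (x : V → ℕ) {v : V} (hvi : v ≠ i) (hvj : v ≠ j) :
    move x i j v = x v := by
  by_cases hij : i = j
  · simp [move, hij]
  · simp [move, hij, Function.update_of_ne hvj, Function.update_of_ne hvi]

lemma move_move (x : V → ℕ) (hij : i ≠ j) (hx : 1 ≤ x i) : move (move x i j) j i = x := by
  funext v
  by_cases hvj : v = j
  · subst hvj
    rw [move_apply_left _ (Ne.symm hij), move_apply_right _ hij]
    omega
  by_cases hvi : v = i
  · subst hvi
    rw [move_apply_right _ (Ne.symm hij), move_apply_left _ hij]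
    omega
  rw [move_apply_of_ne _ hvj hvi, move_apply_of_ne _ hvi hvj]

lemma sum_move_add [Fintype V] {M : Type*} [AddCommMonoid M] (F : V → ℕ → M) (x : V → ℕ)
    (hij : i ≠ j) :
    ∑ v, F v (move x i j v) + (F i (x i) + F j (x j))
      = ∑ v, F v (x v) + (F i (x i - 1) + F j (x j + 1)) := by
  have hj : j ∈ Finset.univ.erase i := Finset.mem_erase.2 ⟨hij.symm, Finset.mem_univ j⟩
  have hsplit : ∀ y : V → ℕ, ∑ v, F v (y v)
      = F i (y i) + (F j (y j) + ∑ v ∈ (Finset.univ.erase i).erase j, F v (y v)) := fun y => by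
    rw [← Finset.add_sum_erase _ _ (Finset.mem_univ i), ← Finset.add_sum_erase _ _ hj]
  have hrest : ∑ v ∈ (Finset.univ.erase i).erase j, F v (move x i j v)
      = ∑ v ∈ (Finset.univ.erase i).erase j, F v (x v) :=
    Finset.sum_congr rfl fun v hv => by
      obtain ⟨hvj, hvi, -⟩ := by simpa only [Finset.mem_erase] using hv
      rw [move_apply_of_ne x hvi hvj]
  rw [hsplit (move x i j), hsplit x, hrest, move_apply_left x hij, move_apply_right x hij]
  abel

lemma sum_move [Fintype V] (x : V → ℕ) (hx : 1 ≤ x i) : ∑ v, move x i j v = ∑ v, x v := by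
  by_cases hij : i = j
  · simp [move, hij]
  · have := sum_move_add (fun _ t => t) x hij
    omega

lemma sum_mul_move_add [Fintype V] (w x : V → ℕ) (hij : i ≠ j) (hx : 1 ≤ x i) :
    ∑ v, w v * move x i j v + w i = ∑ v, w v * x v + w j := by
  have := sum_move_add (fun v t => w v * t) x hij
  obtain ⟨s, hs⟩ := Nat.exists_eq_add_of_le' hx
  simp only [hs, Nat.add_sub_cancel, mul_add, mul_one] at this ⊢
  omega

end Move

section Clustering

variable {V : Type} [Fintype V] [DecidableEq V] {n : ℕ}

def IsMove (G : SimpleGraph V) (x y : Config V n) : Prop :=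
  ∃ i j, G.Adj i j ∧ 1 ≤ x.val i ∧ y.val = move x.val i j

lemma IsMove.symm {G : SimpleGraph V} {x y : Config V n} (h : IsMove G x y) : IsMove G y x := by
  obtain ⟨i, j, hadj, hxi, hy⟩ := h
  refine ⟨j, i, hadj.symm, ?_, ?_⟩
  · rw [hy, move_apply_right _ hadj.ne]
    omega
  · rw [hy, move_move _ hadj.ne hxi]

/-- Every configuration can be driven to `n • δ_{v₀}`: move a particle one step closer to `v₀`,
which lowers the total distance `∑ v, dist v v₀ * x v`. -/
lemma reflTransGen_isMove_single {G : SimpleGraph V} (hconn : G.Connected) (v₀ : V)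
    (z : Config V n) :
    Relation.ReflTransGen (IsMove G) z ⟨Pi.single v₀ n, by simp⟩ := by
  induction hW : ∑ v, G.dist v v₀ * z.val v using Nat.strong_induction_on generalizing z with
  | _ W ih =>
  by_cases hconc : ∀ v, v ≠ v₀ → z.val v = 0
  · have hz₀ : z.val v₀ = n := by
      simpa [Finset.sum_eq_single v₀ (fun v _ => hconc v)] using z.2
    have : z = ⟨Pi.single v₀ n, by simp⟩ := Subtype.ext <| funext fun v => by
      by_cases hv : v = v₀ <;> simp_all
    rw [this]
  push Not at hconc
  obtain ⟨v, hvv₀, hzv⟩ := hconc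
  replace hzv : 1 ≤ z.val v := Nat.one_le_iff_ne_zero.2 hzv
  obtain ⟨p, hp⟩ := (hconn v v₀).exists_walk_length_eq_dist
  cases p with
  | nil => exact absurd rfl hvv₀
  | @cons _ u _ hadj q =>
    have hdist : G.dist u v₀ < G.dist v v₀ := by
      have := SimpleGraph.dist_le q
      simp only [SimpleGraph.Walk.length_cons] at hp
      omega
    have hmove := sum_mul_move_add (fun w => G.dist w v₀) z.val hadj.ne hzv
    let y : Config V n := ⟨move z.val v u, (sum_move _ hzv).trans z.2⟩
    exact .head ⟨v, u, hadj, hzv, rfl⟩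
      (ih (∑ w, G.dist w v₀ * move z.val v u w) (by omega) y rfl)

lemma reflTransGen_isMove {G : SimpleGraph V} (hconn : G.Connected) (x y : Config V n) :
    Relation.ReflTransGen (IsMove G) x y := by
  obtain ⟨v₀⟩ := hconn.nonempty
  exact (reflTransGen_isMove_single hconn v₀ x).trans
    (Relation.ReflTransGen.mono (r := Function.swap (IsMove G)) (fun _ _ h => IsMove.symm h) _ _
      (Relation.reflTransGen_swap.2 (reflTransGen_isMove_single hconn v₀ y)))

def siteWeight (L K t : ℕ) : ℤ := min (t : ℤ) L + max ((t : ℤ) - K + 1) 0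

/-- The order of magnitude of a jump that leaves `t` particles on its target site. -/
def jumpOrder (L K t : ℕ) : ℤ := if t ≤ L ∨ K ≤ t then 1 else 0

lemma siteWeight_succ {L K : ℕ} (hLK : L < K) (t : ℕ) :
    siteWeight L K (t + 1) = siteWeight L K t + jumpOrder L K (t + 1) := by
  simp only [siteWeight, jumpOrder]
  push_cast
  split <;> omega

lemma muCC_add_jumpOrder {L K : ℕ} (hLK : L < K) {x y : Config V n} {i j : V} (hij : i ≠ j)
    (hxi : 1 ≤ x.val i) (hy : y.val = move x.val i j) :
    muCC L K x + jumpOrder L K (x.val j + 1) = muCC L K y + jumpOrder L K (y.val i + 1) := by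
  have hsum := sum_move_add (fun _ t => siteWeight L K t) x.val hij
  obtain ⟨s, hs⟩ := Nat.exists_eq_add_of_le' hxi
  have hyi : y.val i = s := by rw [hy, move_apply_left _ hij, hs, Nat.add_sub_cancel]
  change ∑ v, siteWeight L K (x.val v) + _ = ∑ v, siteWeight L K (y.val v) + _
  rw [hy] at hyi ⊢
  rw [hyi, ← hs]
  simp only [hs, Nat.add_sub_cancel, siteWeight_succ hLK] at hsum ⊢
  linarith

variable {L K : ℕ} {G : SimpleGraph V} {P : ℝ → Config V n → Config V n → ℝ}

lemma muCC_add_order_eq (hLK : L < K)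
    (hrate : ∀ (x y : Config V n) (i j : V), G.Adj i j → 1 ≤ x.val i →
      y.val = move x.val i j → IsTheta (fun ε => P ε x y) (jumpOrder L K (x.val j + 1)))
    {φP : Config V n → Config V n → ℤ}
    (hφP : ∀ x y, EPos P x y → IsTheta (fun ε => P ε x y) (φP x y))
    {x y : Config V n} (hxy : IsMove G x y) (hE : EPos P x y) (hE' : EPos P y x) :
    muCC L K x + φP x y = muCC L K y + φP y x := by
  obtain ⟨i, j, hadj, hxi, hy⟩ := hxy
  have hyj : 1 ≤ y.val j := by
    rw [hy, move_apply_right _ hadj.ne]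
    omega
  have hx : x.val = move y.val j i := by rw [hy, move_move _ hadj.ne hxi]
  rw [(hφP x y hE).unique (hrate x y i j hadj hxi hy),
    (hφP y x hE').unique (hrate y x j i hadj.symm hyj hx)]
  exact muCC_add_jumpOrder hLK hadj.ne hxi hy

end Clustering

theorem clustering_with_carrying_capacity_stationary_general
    {V : Type} [Fintype V] [DecidableEq V]
    (G : SimpleGraph V) (hconn : G.Connected)
    (n : ℕ)
    (L K : ℕ) (hLK : L < K)
    (P : ℝ → Config V n → Config V n → ℝ)
    (hstoch : ∀ ε : ℝ, 0 < ε →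
      (∀ x y : Config V n, 0 ≤ P ε x y) ∧ ∀ x : Config V n, ∑ y, P ε x y = 1)
    (hmoves : ∀ x y : Config V n, EPos P x y →
      y = x ∨ ∃ i j : V, G.Adj i j ∧ 1 ≤ x.val i ∧ y.val = move x.val i j)
    (hzero : ∀ x y : Config V n, ¬ EPos P x y →
      ∃ εbar > (0 : ℝ), ∀ ε : ℝ, 0 < ε → ε < εbar → P ε x y = 0)
    (hsym : ∀ x y : Config V n, EPos P x y ↔ EPos P y x)
    (hrate : ∀ (x y : Config V n) (i j : V), (G.Adj i j ∨ j = i) → 1 ≤ x.val i →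
      y.val = move x.val i j →
      IsTheta (fun ε => P ε x y)
        (if x.val j + 1 ≤ L ∨ K ≤ x.val j + 1 then 1 else 0))
    (φP : Config V n → Config V n → ℤ)
    (hφP : ∀ x y : Config V n, EPos P x y → IsTheta (fun ε => P ε x y) (φP x y))
    (c : ℤ) (hc : IsLeast (Set.range (muCC L K : Config V n → ℤ)) c)
    (π : ℝ → Config V n → ℝ)
    (hstat : ∀ ε : ℝ, 0 < ε → (∀ z : Config V n, 0 ≤ π ε z) ∧ (∑ z, π ε z) = 1 ∧
      ∀ y : Config V n, (∑ x, π ε x * P ε x y) = π ε y)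
    (φπ : Config V n → ℤ)
    (hφπ : ∀ z : Config V n, IsTheta (fun ε => π ε z) (φπ z)) :
    (∀ x y : Config V n, EPos P x y →
      muCC L K x + φP x y = muCC L K y + φP y x) ∧
    (∀ z : Config V n, φπ z = muCC L K z - c) := by
  have hrate' : ∀ (x y : Config V n) (i j : V), G.Adj i j → 1 ≤ x.val i →
      y.val = move x.val i j → IsTheta (fun ε => P ε x y) (jumpOrder L K (x.val j + 1)) :=
    fun x y i j hadj => hrate x y i j (.inl hadj)
  have hbalance : ∀ x y, EPos P x y → muCC L K x + φP x y = muCC L K y + φP y x := by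
    intro x y hE
    rcases hmoves x y hE with rfl | hxy
    · rfl
    · exact muCC_add_order_eq hLK hrate' hφP hxy hE ((hsym x y).1 hE)
  refine ⟨hbalance, fun z => ?_⟩
  have hreach : ∀ x y, Relation.ReflTransGen (EPos P) x y := fun x y =>
    Relation.ReflTransGen.mono (fun a b ⟨i, j, hadj, hai, hb⟩ => ⟨_, hrate' a b i j hadj hai hb⟩)
      _ _ (reflTransGen_isMove hconn x y)
  obtain ⟨d, hd⟩ := exists_order_stationary_eq_add_const hstoch hzero (fun x y => (hsym x y).1)
    hφP (fun ε hε => ⟨(hstat ε hε).1, (hstat ε hε).2.2⟩) hφπ hbalance hreach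
  obtain ⟨⟨z₀, hz₀⟩, hφπ_nonneg⟩ := isLeast_range_order_of_sum_eq_one
    (fun ε hε => ⟨(hstat ε hε).1, (hstat ε hε).2.1⟩) hφπ
  obtain ⟨⟨x₀, hx₀⟩, hc_le⟩ := hc
  have hcd : c + d = 0 := by
    have hx₀d : 0 ≤ muCC L K x₀ + d := hd x₀ ▸ hφπ_nonneg ⟨x₀, rfl⟩
    have hz₀d : muCC L K z₀ + d = 0 := hd z₀ ▸ hz₀
    have := hc_le ⟨z₀, rfl⟩
    omega
  rw [hd z]
  omega

/-- For a clustering process with carrying capacity `(L,K)`, the function `μ` satisfies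
order-of-magnitude detailed balance (so the family is OM-reversible), and any stationary
distributions `π^ε` with integer orders of magnitude satisfy `φ(π(x)) = μ(x) − c`, where
`c = min_{x ∈ Ω} μ(x)`. -/
theorem clustering_with_carrying_capacity_stationary
    {V : Type} [Fintype V] [DecidableEq V]
    (G : SimpleGraph V) (hconn : G.Connected)
    (n : ℕ) (hn : 1 ≤ n)
    (L K : ℕ) (hL : 0 < L) (hLK : L < K)
    (P : ℝ → Config V n → Config V n → ℝ)
    (hstoch : ∀ ε : ℝ, 0 < ε →
      (∀ x y : Config V n, 0 ≤ P ε x y) ∧ ∀ x : Config V n, ∑ y, P ε x y = 1)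
    (hmoves : ∀ x y : Config V n, EPos P x y →
      y = x ∨ ∃ i j : V, G.Adj i j ∧ 1 ≤ x.val i ∧ y.val = move x.val i j)
    (hzero : ∀ x y : Config V n, ¬ EPos P x y →
      ∃ εbar > (0 : ℝ), ∀ ε : ℝ, 0 < ε → ε < εbar → P ε x y = 0)
    (hsym : ∀ x y : Config V n, EPos P x y ↔ EPos P y x)
    (hrate : ∀ (x y : Config V n) (i j : V), (G.Adj i j ∨ j = i) → 1 ≤ x.val i →
      y.val = move x.val i j →
      IsTheta (fun ε => P ε x y)
        (if x.val j + 1 ≤ L ∨ K ≤ x.val j + 1 then 1 else 0))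
    (φP : Config V n → Config V n → ℤ)
    (hφP : ∀ x y : Config V n, EPos P x y → IsTheta (fun ε => P ε x y) (φP x y))
    (c : ℤ) (hc : IsLeast (Set.range (muCC L K : Config V n → ℤ)) c)
    (π : ℝ → Config V n → ℝ)
    (hstat : ∀ ε : ℝ, 0 < ε → (∀ z : Config V n, 0 ≤ π ε z) ∧ (∑ z, π ε z) = 1 ∧
      ∀ y : Config V n, (∑ x, π ε x * P ε x y) = π ε y)
    (φπ : Config V n → ℤ)
    (hφπ : ∀ z : Config V n, IsTheta (fun ε => π ε z) (φπ z)) :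
    (∀ x y : Config V n, EPos P x y →
      muCC L K x + φP x y = muCC L K y + φP y x) ∧
    (∀ z : Config V n, φπ z = muCC L K z - c) :=
  clustering_with_carrying_capacity_stationary_general G hconn n L K hLK P hstoch hmoves hzero hsym
    hrate φP hφP c hc π hstat φπ hφπ
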